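/- The number 13631489 is prime, 13631489 divides the Fermat number F_18 = 2^(2^18) + 1, and the multiplicative order of 2 in ZMod 13631489 is exactly 524288 = 2^19; hence this 32-bit prime supports exact bit-shift number theoretic transforms of every power-of-two length N = 2^n with n ≤ 19. -/
import Mathlib

/-- `13631489` is prime, divides the Fermat number `F_18 = 2^(2^18) + 1`, and
the multiplicative order of `2` modulo `13631489` is exactly `524288 = 2^19`;
hence for every `n ≤ 19` the power `2^(2^(19-n))` is a root of unity of exact
order `2^n`, supporting bit-shift transforms of every length `2^n`, `n ≤ 19`. -/
theorem rader_prime_13631489 :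
    Nat.Prime 13631489 ∧ 13631489 ∣ 2 ^ 2 ^ 18 + 1 ∧
      orderOf (2 : ZMod 13631489) = 524288 ∧
      ∀ n : ℕ, n ≤ 19 →
        orderOf ((2 : ZMod 13631489) ^ 2 ^ (19 - n)) = 2 ^ n := by
  have h1 : (2 : ZMod 13631489) ^ 2 ^ 1 = 4 := by decide
  have h2 : (2 : ZMod 13631489) ^ 2 ^ 2 = 16 := by
    rw [pow_succ 2 1, pow_mul, h1]; decide
  have h3 : (2 : ZMod 13631489) ^ 2 ^ 3 = 256 := by
    rw [pow_succ 2 2, pow_mul, h2]; decide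
  have h4 : (2 : ZMod 13631489) ^ 2 ^ 4 = 65536 := by
    rw [pow_succ 2 3, pow_mul, h3]; decide
  have h5 : (2 : ZMod 13631489) ^ 2 ^ 5 = 1048261 := by
    rw [pow_succ 2 4, pow_mul, h4]; decide
  have h6 : (2 : ZMod 13631489) ^ 2 ^ 6 = 3164342 := by
    rw [pow_succ 2 5, pow_mul, h5]; decide
  have h7 : (2 : ZMod 13631489) ^ 2 ^ 7 = 9153547 := by
    rw [pow_succ 2 6, pow_mul, h6]; decide
  have h8 : (2 : ZMod 13631489) ^ 2 ^ 8 = 3341897 := by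
    rw [pow_succ 2 7, pow_mul, h7]; decide
  have h9 : (2 : ZMod 13631489) ^ 2 ^ 9 = 10252398 := by
    rw [pow_succ 2 8, pow_mul, h8]; decide
  have h10 : (2 : ZMod 13631489) ^ 2 ^ 10 = 2803299 := by
    rw [pow_succ 2 9, pow_mul, h9]; decide
  have h11 : (2 : ZMod 13631489) ^ 2 ^ 11 = 32346 := by
    rw [pow_succ 2 10, pow_mul, h10]; decide
  have h12 : (2 : ZMod 13631489) ^ 2 ^ 12 = 10270552 := by
    rw [pow_succ 2 11, pow_mul, h11]; decide
  have h13 : (2 : ZMod 13631489) ^ 2 ^ 13 = 580251 := by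
    rw [pow_succ 2 12, pow_mul, h12]; decide
  have h14 : (2 : ZMod 13631489) ^ 2 ^ 14 = 7076190 := by
    rw [pow_succ 2 13, pow_mul, h13]; decide
  have h15 : (2 : ZMod 13631489) ^ 2 ^ 15 = 11792823 := by
    rw [pow_succ 2 14, pow_mul, h14]; decide
  have h16 : (2 : ZMod 13631489) ^ 2 ^ 16 = 1598622 := by
    rw [pow_succ 2 15, pow_mul, h15]; decide
  have h17 : (2 : ZMod 13631489) ^ 2 ^ 17 = 1635631 := by
    rw [pow_succ 2 16, pow_mul, h16]; decide
  have h18 : (2 : ZMod 13631489) ^ 2 ^ 18 = 13631488 := by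
    rw [pow_succ 2 17, pow_mul, h17]; decide
  have hneg : (2 : ZMod 13631489) ^ 2 ^ 18 = -1 := by rw [h18]; decide
  have hp : Nat.Prime 13631489 := by norm_num
  have h19 : (2 : ZMod 13631489) ^ 2 ^ 19 = 1 := by
    rw [pow_succ 2 18, pow_mul, hneg]; ring
  have hord : orderOf (2 : ZMod 13631489) = 524288 := by
    have := Fact.mk Nat.prime_two
    have h := orderOf_eq_prime_pow (x := (2 : ZMod 13631489)) (p := 2) (n := 18)
      (by rw [hneg]; decide) h19
    simpa using h
  refine ⟨hp, ?_, hord, ?_⟩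
  · have : ((2 ^ 2 ^ 18 + 1 : ℕ) : ZMod 13631489) = 0 := by
      have hneg' : (2 : ZMod 13631489) ^ (262144 : ℕ) = -1 := by
        rw [show (262144 : ℕ) = 2 ^ 18 by norm_num]; exact hneg
      push_cast
      rw [hneg']; ring
    exact (ZMod.natCast_eq_zero_iff _ _).mp this
  · intro n hn
    rw [orderOf_pow' _ (by positivity), hord]
    have hd : (2 : ℕ) ^ (19 - n) ∣ 2 ^ 19 := pow_dvd_pow 2 (by omega)
    have : Nat.gcd 524288 (2 ^ (19 - n)) = 2 ^ (19 - n) := by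
      rw [Nat.gcd_comm]
      exact Nat.gcd_eq_left hd
    rw [this]
    have : (524288 : ℕ) = 2 ^ 19 := by norm_num
    rw [this, Nat.pow_div (by omega) (by norm_num), Nat.sub_sub_self hn]
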